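/- Define cφ3'(n) by ∑_{n≥0} cφ3'(n) q^n = 9 q ∏_{n≥1} (1-q^{9n})^3 / ((1-q^{3n})(1-q^n)^3). Assuming a(15n+6) ≡ 0 (mod 5) and a(15n+12) ≡ 0 (mod 5) for all n ≥ 0 (where ∑ a(n) q^n = ∏_{n≥1}(1-q^{3n})^{-1}(1-q^n)^{-3}), one has cφ3'(45n+7) ≡ 0 (mod 5) for all n ≥ 0. -/

import Mathlib

/-!
Differentiating the finite Jacobi triple product
`∏_{k=1}^m (1 - q^k z)(z - q^(k-1)) = ∑_i (-1)^(m+i) [2m, i]_q q^((i-m)(i-m+1)/2) z^i`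
at `z = 1`, where its factor `z - 1` vanishes, gives `(q;q)_m (q;q)_(m-1)` as a sum over `i`.
Modulo `q^(N+1)` with `m > 2N`, every `q`-binomial that survives is `(q;q)_N⁻¹`, and pairing
`i - m = j` with `i - m = -j - 1` yields Jacobi's identity
`(q;q)_N^3 ≡ ∑_j (-1)^j (2j+1) q^(j(j+1)/2)`.

With `q = X^9` this gives `cφ3'(n+1) = 9 ∑_j (-1)^j (2j+1) a(n - 9 j(j+1)/2)`. For `n = 45m + 6`
the index is `≡ 6` or `12 (mod 15)` unless `j ≡ 2 (mod 5)`, in which case `5 ∣ 2j + 1`.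
-/

open PowerSeries Finset

/-- Coefficients of `∏_{k≥1} 1/((1-q^{3k})(1-q^k)^3)` (truncated product suffices). -/
noncomputable def a (n : ℕ) : ℤ :=
  PowerSeries.coeff (R := ℤ) n (PowerSeries.invOfUnit
    (∏ k ∈ Finset.Icc 1 n, ((1 - PowerSeries.X ^ (3 * k)) * (1 - PowerSeries.X ^ k) ^ 3)) 1)

/-- `a` extended to the integers by `0` on negative arguments. -/
noncomputable def aext (j : ℤ) : ℤ := if 0 ≤ j then a j.toNat else 0

/-- Coefficients of `9 q ∏_{k≥1} (1-q^{9k})^3/((1-q^{3k})(1-q^k)^3)`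
(truncated products suffice for the coefficient of `q^n`). -/
noncomputable def cphi3' (n : ℕ) : ℤ :=
  PowerSeries.coeff (R := ℤ) n ((9 : ℤ⟦X⟧) * PowerSeries.X *
    (∏ k ∈ Finset.Icc 1 n, (1 - PowerSeries.X ^ (9 * k)) ^ 3) *
    PowerSeries.invOfUnit
      (∏ k ∈ Finset.Icc 1 n, ((1 - PowerSeries.X ^ (3 * k)) * (1 - PowerSeries.X ^ k) ^ 3)) 1)

def triangular (j : ℤ) : ℕ := (j * (j + 1) / 2).toNat

theorem two_mul_triangular (j : ℤ) : 2 * (triangular j : ℤ) = j * (j + 1) := by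
  have h2 : (2 : ℤ) ∣ j * (j + 1) := (Int.even_mul_succ_self j).two_dvd
  have h0 : 0 ≤ j * (j + 1) := by rcases le_or_gt 0 j with h | h <;> nlinarith
  unfold triangular
  omega

theorem triangular_of_eq_add_one {j k : ℤ} (h : k = j + 1) :
    (triangular k : ℤ) = triangular j + k := by
  subst h
  linarith [two_mul_triangular j, two_mul_triangular (j + 1)]

theorem triangular_neg_sub_one (j : ℤ) : triangular (-j - 1) = triangular j := by
  have := two_mul_triangular (-j - 1)
  have := two_mul_triangular j
  have : (triangular (-j - 1) : ℤ) = triangular j := by linarith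
  exact_mod_cast this

theorem le_triangular (j : ℤ) : j ≤ triangular j ∧ -j - 1 ≤ triangular j := by
  have := two_mul_triangular j
  constructor <;> nlinarith [sq_nonneg (j - 1), sq_nonneg (j + 2)]

section qAnalogues

variable {A : Type*} [CommRing A] (q : A)

def qBinom : ℕ → ℕ → A
  | _, 0 => 1
  | 0, _ + 1 => 0
  | n + 1, k + 1 => qBinom n k + q ^ (k + 1) * qBinom n (k + 1)

def qPoch (n : ℕ) : A := ∏ k ∈ range n, (1 - q ^ (k + 1))

@[simp] theorem qBinom_zero_right (n : ℕ) : qBinom q n 0 = 1 := by cases n <;> rfl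

@[simp] theorem qBinom_zero_succ (k : ℕ) : qBinom q 0 (k + 1) = 0 := rfl

theorem qBinom_succ_succ (n k : ℕ) :
    qBinom q (n + 1) (k + 1) = qBinom q n k + q ^ (k + 1) * qBinom q n (k + 1) := rfl

theorem qBinom_eq_zero_of_lt {n k : ℕ} (h : n < k) : qBinom q n k = 0 := by
  induction n generalizing k with
  | zero => obtain ⟨k, rfl⟩ := Nat.exists_eq_add_of_lt h; rfl
  | succ n ih =>
    obtain ⟨k, rfl⟩ := Nat.exists_eq_add_of_lt (Nat.zero_lt_of_lt h)
    rw [qBinom_succ_succ, ih (by omega), ih (by omega), mul_zero, add_zero]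

@[simp] theorem qBinom_self (n : ℕ) : qBinom q n n = 1 := by
  induction n with
  | zero => rfl
  | succ n ih =>
    rw [qBinom_succ_succ, ih, qBinom_eq_zero_of_lt q n.lt_succ_self, mul_zero, add_zero]

theorem qPoch_succ (n : ℕ) : qPoch q (n + 1) = qPoch q n * (1 - q ^ (n + 1)) :=
  prod_range_succ _ _

@[simp] theorem qPoch_zero : qPoch q 0 = 1 := rfl

/-- The second Pascal rule; `n - k` truncates only where `qBinom q n k = 0`. -/
theorem qBinom_succ_succ' (n k : ℕ) :
    qBinom q (n + 1) (k + 1) = q ^ (n - k) * qBinom q n k + qBinom q n (k + 1) := by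
  induction n generalizing k with
  | zero => cases k <;> simp [qBinom_succ_succ]
  | succ n ih =>
    cases k with
    | zero =>
      have h1 := ih 0
      have h2 := qBinom_succ_succ q n 0
      rw [qBinom_succ_succ q (n + 1) 0]
      simp only [qBinom_zero_right, Nat.sub_zero, zero_add, pow_one, mul_one] at h1 h2 ⊢
      linear_combination q * h1 - h2
    | succ s =>
      rw [qBinom_succ_succ q (n + 1) (s + 1)]
      rcases le_or_gt n s with hns | hsn
      · rw [qBinom_eq_zero_of_lt q (by omega : n + 1 < s + 1 + 1),
          show n + 1 - (s + 1) = 0 by omega]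
        ring
      · have hexp : q ^ (s + 1 + 1) * q ^ (n - (s + 1)) = q ^ (n - s) * q ^ (s + 1) := by
          rw [← pow_add, ← pow_add]; congr 1; omega
        rw [show n + 1 - (s + 1) = n - s by omega]
        linear_combination ih s - q ^ (n - s) * qBinom_succ_succ q n s
          + q ^ (s + 1 + 1) * ih (s + 1) - qBinom_succ_succ q n (s + 1) + qBinom q n (s + 1) * hexp

theorem qBinom_mul_qPoch {n k : ℕ} (h : k ≤ n) :
    qBinom q n k * (qPoch q k * qPoch q (n - k)) = qPoch q n := by
  induction n generalizing k with
  | zero =>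
    obtain rfl : k = 0 := by omega
    simp
  | succ n ih =>
    cases k with
    | zero => simp
    | succ k =>
      rcases (Nat.le_of_succ_le_succ h).lt_or_eq with hlt | rfl
      · have h1 := ih (k := k) (by omega)
        have h2 := ih (k := k + 1) (by omega)
        rw [show n - k = (n - (k + 1)) + 1 by omega, qPoch_succ] at h1
        rw [qPoch_succ] at h2
        rw [qBinom_succ_succ, show n + 1 - (k + 1) = (n - (k + 1)) + 1 by omega, qPoch_succ,
          qPoch_succ, qPoch_succ]
        have hexp : q ^ (k + 1) * q ^ (n - (k + 1) + 1) = q ^ (n + 1) := by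
          rw [← pow_add]; congr 1; omega
        linear_combination (1 - q ^ (k + 1)) * h1 + q ^ (k + 1) * (1 - q ^ (n - (k + 1) + 1)) * h2
          - qPoch q n * hexp
      · simp

/-- For `n = 2 * m + 1` these are the coefficients of the product halfway between `tripleProd q m`
and `tripleProd q (m + 1)`. -/
def tripleCoeff (n m i : ℕ) : A := (-1) ^ (m + i) * qBinom q n i * q ^ triangular (i - m)

/-- `z ^ m ∏_{k=1}^m (1 - q^k z)(1 - q^(k-1)/z)`, a polynomial in `z`. -/
noncomputable def tripleProd (m : ℕ) : Polynomial A :=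
  ∏ k ∈ range m,
    (1 - Polynomial.C (q ^ (k + 1)) * Polynomial.X) * (Polynomial.X - Polynomial.C (q ^ k))

theorem coeff_mul_one_sub_C_mul_X {m : ℕ} {p : Polynomial A}
    (hp : ∀ i, p.coeff i = tripleCoeff q (2 * m) m i) (i : ℕ) :
    (p * (1 - Polynomial.C (q ^ (m + 1)) * Polynomial.X)).coeff i
      = tripleCoeff q (2 * m + 1) m i := by
  rw [show p * (1 - Polynomial.C (q ^ (m + 1)) * Polynomial.X)
      = p - Polynomial.C (q ^ (m + 1)) * (p * Polynomial.X) by ring,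
    Polynomial.coeff_sub, Polynomial.coeff_C_mul]
  cases i with
  | zero => simp [hp, tripleCoeff]
  | succ t =>
    rw [Polynomial.coeff_mul_X, hp, hp, tripleCoeff, tripleCoeff, tripleCoeff, qBinom_succ_succ']
    rcases le_or_gt t (2 * m) with ht | ht
    · have hexp : q ^ (2 * m - t) * q ^ triangular ((t + 1 : ℕ) - m : ℤ)
          = q ^ (m + 1) * q ^ triangular (t - m : ℤ) := by
        rw [← pow_add, ← pow_add]
        congr 1
        have := triangular_of_eq_add_one (j := (t : ℤ) - m) (k := (t + 1 : ℕ) - m)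
          (by push_cast; ring)
        omega
      linear_combination ((-1) ^ (m + t) * qBinom q (2 * m) t) * hexp
    · rw [qBinom_eq_zero_of_lt q ht]
      ring

theorem coeff_mul_X_sub_C {m : ℕ} {p : Polynomial A}
    (hp : ∀ i, p.coeff i = tripleCoeff q (2 * m + 1) m i) (i : ℕ) :
    (p * (Polynomial.X - Polynomial.C (q ^ m))).coeff i
      = tripleCoeff q (2 * (m + 1)) (m + 1) i := by
  rw [mul_sub, Polynomial.coeff_sub, Polynomial.coeff_mul_C, mul_comm _ (q ^ m)]
  cases i with
  | zero =>
    have := triangular_of_eq_add_one (j := (0 : ℕ) - (m + 1 : ℕ)) (k := (0 : ℕ) - m)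
      (by push_cast; ring)
    have hexp : q ^ m * q ^ triangular ((0 : ℕ) - m : ℤ)
        = q ^ triangular ((0 : ℕ) - (m + 1 : ℕ) : ℤ) := by
      rw [← pow_add]; congr 1; omega
    simp only [Polynomial.coeff_mul_X_zero, hp, tripleCoeff, qBinom_zero_right]
    linear_combination -(-1) ^ m * hexp
  | succ t =>
    rw [Polynomial.coeff_mul_X, hp, hp, tripleCoeff, tripleCoeff, tripleCoeff,
      show 2 * (m + 1) = 2 * m + 1 + 1 by ring, qBinom_succ_succ q (2 * m + 1) t]
    have hexp : q ^ m * q ^ triangular ((t + 1 : ℕ) - m : ℤ)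
        = q ^ (t + 1) * q ^ triangular ((t + 1 : ℕ) - (m + 1 : ℕ) : ℤ) := by
      rw [← pow_add, ← pow_add]
      congr 1
      have := triangular_of_eq_add_one (j := (t + 1 : ℕ) - (m + 1 : ℕ)) (k := (t + 1 : ℕ) - m)
        (by push_cast; ring)
      omega
    rw [show ((t : ℕ) : ℤ) - m = (t + 1 : ℕ) - (m + 1 : ℕ) by push_cast; ring]
    linear_combination (-1) ^ (m + t) * qBinom q (2 * m + 1) (t + 1) * hexp

/-- The finite Jacobi triple product identity. -/
theorem coeff_tripleProd (m i : ℕ) : (tripleProd q m).coeff i = tripleCoeff q (2 * m) m i := by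
  induction m generalizing i with
  | zero =>
    cases i with
    | zero => simp [tripleProd, tripleCoeff, triangular]
    | succ i => simp [tripleProd, tripleCoeff, Polynomial.coeff_one]
  | succ m ih =>
    rw [tripleProd, prod_range_succ, ← tripleProd, ← mul_assoc]
    exact coeff_mul_X_sub_C q (coeff_mul_one_sub_C_mul_X q ih) i

theorem natDegree_tripleProd_lt (m : ℕ) : (tripleProd q m).natDegree < 2 * m + 1 := by
  refine Nat.lt_succ_of_le (Polynomial.natDegree_le_iff_coeff_eq_zero.mpr fun i hi => ?_)
  rw [coeff_tripleProd, tripleCoeff, qBinom_eq_zero_of_lt q hi, mul_zero, zero_mul]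

theorem eval_one_derivative_eq_sum {p : Polynomial A} {n : ℕ} (hp : p.natDegree < n) :
    (Polynomial.derivative p).eval 1 = ∑ i ∈ range n, (i : A) * p.coeff i := by
  rw [Polynomial.derivative_eval, Polynomial.sum_over_range' _ (by simp) n hp]
  simp [mul_comm]

theorem eval_one_derivative_tripleProd (m : ℕ) :
    (Polynomial.derivative (tripleProd q (m + 1))).eval 1 = qPoch q (m + 1) * qPoch q m := by
  rw [tripleProd, prod_mul_distrib,
    prod_range_succ' (fun k => Polynomial.X - Polynomial.C (q ^ k))]
  simp [Polynomial.derivative_mul, Polynomial.eval_prod, qPoch]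

/-- Differentiating the triple product at `z = 1`, where its factor `z - 1` vanishes. -/
theorem qPoch_succ_mul_qPoch (m : ℕ) :
    qPoch q (m + 1) * qPoch q m
      = ∑ i ∈ range (2 * (m + 1) + 1), (i : A) * tripleCoeff q (2 * (m + 1)) (m + 1) i := by
  rw [← eval_one_derivative_tripleProd, eval_one_derivative_eq_sum (natDegree_tripleProd_lt q _)]
  simp only [coeff_tripleProd]

end qAnalogues

theorem sum_range_two_mul_of_symmetric {A : Type*} [CommRing A] (g : ℤ → A)
    (hg : ∀ j, g (-j - 1) = g j) (M : ℕ) :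
    ∑ i ∈ range (2 * M), (i : A) * (-1) ^ (M + i) * g (i - M)
      = ∑ j ∈ range M, (-1) ^ j * (2 * j + 1) * g j := by
  rw [two_mul, sum_range_add, ← sum_range_reflect, ← sum_add_distrib]
  refine sum_congr rfl fun j hj => ?_
  obtain ⟨r, rfl⟩ := Nat.exists_eq_add_of_lt (mem_range.mp hj)
  rw [show j + r + 1 - 1 - j = r by omega,
    show ((r : ℕ) : ℤ) - (j + r + 1 : ℕ) = -j - 1 by push_cast; ring,
    show ((j + r + 1 + j : ℕ) : ℤ) - (j + r + 1 : ℕ) = j by push_cast; ring, hg,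
    show j + r + 1 + r = j + 1 + 2 * r by ring,
    show j + r + 1 + (j + r + 1 + j) = j + 2 * (j + r + 1) by ring]
  simp only [pow_add, pow_mul, neg_one_sq, one_pow]
  push_cast
  ring

section Jacobi

variable {A : Type*} [CommRing A] {q : A} {N : ℕ}

theorem qPoch_eq_of_pow_eq_zero (hq : q ^ (N + 1) = 0) {L : ℕ} (hL : N ≤ L) :
    qPoch q L = qPoch q N :=
  (prod_subset (range_subset_range.mpr hL) fun k _ hk =>
    by rw [pow_eq_zero_of_le (by simpa using hk) hq, sub_zero]).symm

theorem isUnit_qPoch_of_pow_eq_zero (hq : q ^ (N + 1) = 0) (L : ℕ) : IsUnit (qPoch q L) :=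
  IsUnit.prod_iff.mpr fun k _ => IsNilpotent.isUnit_one_sub
    ⟨N + 1, by rw [← pow_mul, mul_comm, pow_mul, hq, zero_pow (by omega)]⟩

theorem qBinom_mul_qPoch_of_pow_eq_zero (hq : q ^ (N + 1) = 0) {n k : ℕ} (hkn : k ≤ n)
    (hk : N ≤ k) (hnk : N ≤ n - k) : qBinom q n k * qPoch q N = 1 := by
  have h := qBinom_mul_qPoch q hkn
  rw [qPoch_eq_of_pow_eq_zero hq hk, qPoch_eq_of_pow_eq_zero hq hnk,
    qPoch_eq_of_pow_eq_zero hq (show N ≤ n by omega)] at h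
  exact (isUnit_qPoch_of_pow_eq_zero hq N).mul_left_inj.mp (by linear_combination h)

theorem qPoch_mul_tripleCoeff_of_pow_eq_zero (hq : q ^ (N + 1) = 0) {M i : ℕ} (hM : 2 * N < M)
    (hi : i ≤ 2 * M) :
    qPoch q N * tripleCoeff q (2 * M) M i = (-1) ^ (M + i) * q ^ triangular (i - M) := by
  rcases le_or_gt (triangular (i - M)) N with h | h
  · have := le_triangular ((i : ℤ) - M)
    calc _ = (-1) ^ (M + i) * (qBinom q (2 * M) i * qPoch q N) * q ^ triangular (i - M) := by
          rw [tripleCoeff]; ring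
      _ = _ := by rw [qBinom_mul_qPoch_of_pow_eq_zero hq hi (by omega) (by omega), mul_one]
  · rw [tripleCoeff, pow_eq_zero_of_le h hq]
    ring

/-- Jacobi's identity `∏ (1 - q^k)^3 = ∑ (-1)^j (2j+1) q^(j(j+1)/2)`, truncated at
`q^(N+1) = 0`. -/
theorem qPoch_pow_three_of_pow_eq_zero (hq : q ^ (N + 1) = 0) :
    qPoch q N ^ 3 = ∑ j ∈ range (N + 1), (-1) ^ j * (2 * j + 1) * q ^ triangular j := by
  have hzero : ∀ j : ℤ, N < triangular j → q ^ triangular j = 0 :=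
    fun j h => pow_eq_zero_of_le h hq
  calc qPoch q N ^ 3 = qPoch q N * (qPoch q (2 * N + 1) * qPoch q (2 * N)) := by
        rw [qPoch_eq_of_pow_eq_zero hq (L := 2 * N + 1) (by omega),
          qPoch_eq_of_pow_eq_zero hq (L := 2 * N) (by omega)]
        ring
    _ = ∑ i ∈ range (2 * (2 * N + 1) + 1),
          (i : A) * (-1) ^ (2 * N + 1 + i) * q ^ triangular (i - (2 * N + 1 : ℕ)) := by
        rw [qPoch_succ_mul_qPoch, mul_sum]
        refine sum_congr rfl fun i hi => ?_
        rw [mul_left_comm, qPoch_mul_tripleCoeff_of_pow_eq_zero hq (by omega) (by simpa using hi),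
          mul_assoc]
    _ = ∑ j ∈ range (2 * N + 1), (-1) ^ j * (2 * j + 1) * q ^ triangular j := by
        have := le_triangular ((2 * (2 * N + 1) : ℕ) - (2 * N + 1 : ℕ) : ℤ)
        rw [sum_range_succ, hzero _ (by omega), mul_zero, add_zero]
        exact sum_range_two_mul_of_symmetric (fun j => q ^ triangular j)
          (fun j => by simp only [triangular_neg_sub_one]) _
    _ = ∑ j ∈ range (N + 1), (-1) ^ j * (2 * j + 1) * q ^ triangular j := by
        refine (sum_subset (range_subset_range.mpr (by omega)) fun j _ hj => ?_).symm
        rw [hzero _ (by have := le_triangular (j : ℤ); simp at hj; omega), mul_zero]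

end Jacobi

theorem qPoch_pow_three_sModEq {A : Type*} [CommRing A] (q : A) (N : ℕ) :
    qPoch q N ^ 3 ≡ ∑ j ∈ range (N + 1), (-1) ^ j * (2 * j + 1) * q ^ triangular j
      [SMOD Ideal.span {q ^ (N + 1)}] := by
  have hq : Ideal.Quotient.mk (Ideal.span {q ^ (N + 1)}) q ^ (N + 1) = 0 := by
    rw [← map_pow, Ideal.Quotient.eq_zero_iff_mem]
    exact Ideal.mem_span_singleton_self _
  rw [SModEq.idealQuotientMk]
  simpa [qPoch, map_prod, map_ofNat] using qPoch_pow_three_of_pow_eq_zero hq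

section PowerSeries

variable {R : Type*} [CommRing R]

theorem coeff_eq_of_sModEq {n m : ℕ} {f g : R⟦X⟧} (h : f ≡ g [SMOD Ideal.span {X ^ n}])
    (hm : m < n) : coeff m f = coeff m g := by
  rw [SModEq.sub_mem, Ideal.mem_span_singleton, X_pow_dvd_iff] at h
  exact sub_eq_zero.mp (by simpa using h m hm)

theorem invOfUnit_sModEq {I : Ideal R⟦X⟧} {φ ψ : R⟦X⟧} (hφ : constantCoeff φ = 1)
    (hψ : constantCoeff ψ = 1) (h : φ ≡ ψ [SMOD I]) :
    invOfUnit φ 1 ≡ invOfUnit ψ 1 [SMOD I] := by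
  rw [SModEq.idealQuotientMk] at h ⊢
  refine left_inv_eq_right_inv (a := Ideal.Quotient.mk I φ) ?_ ?_
  · rw [← map_mul, invOfUnit_mul φ 1 (by simpa using hφ), map_one]
  · rw [h, ← map_mul, mul_invOfUnit ψ 1 (by simpa using hψ), map_one]

end PowerSeries

noncomputable def aDenom (L : ℕ) : ℤ⟦X⟧ :=
  ∏ k ∈ Icc 1 L, ((1 - X ^ (3 * k)) * (1 - X ^ k) ^ 3)

theorem constantCoeff_aDenom (L : ℕ) : constantCoeff (aDenom L) = 1 := by
  refine (map_prod _ _ _).trans (prod_eq_one fun k hk => ?_)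
  have : k ≠ 0 := by simp at hk; omega
  simp [this]

theorem coeff_invOfUnit_aDenom {m L : ℕ} (h : m ≤ L) :
    coeff m (invOfUnit (aDenom L) 1) = a m := by
  refine coeff_eq_of_sModEq (invOfUnit_sModEq (constantCoeff_aDenom L) (constantCoeff_aDenom m) ?_)
    m.lt_succ_self
  rw [SModEq.idealQuotientMk, aDenom, map_prod, map_prod]
  refine (prod_subset (Icc_subset_Icc_right h) fun k hk hkm => ?_).symm
  have hX : Ideal.Quotient.mk (Ideal.span {X ^ (m + 1)}) (X ^ k : ℤ⟦X⟧) = 0 := by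
    rw [Ideal.Quotient.eq_zero_iff_mem, Ideal.mem_span_singleton]
    exact pow_dvd_pow _ (by simp at hk hkm; omega)
  simp [hX, pow_mul']

theorem aext_natCast_sub (n k : ℕ) : aext ((n : ℤ) - k) = if k ≤ n then a (n - k) else 0 := by
  unfold aext
  split_ifs
  · congr 1; omega
  · omega
  · omega
  · rfl

theorem prod_Icc_one_eq_prod_range {M : Type*} [CommMonoid M] (f : ℕ → M) (n : ℕ) :
    ∏ k ∈ Icc 1 n, f k = ∏ k ∈ range n, f (k + 1) := by
  rw [range_eq_Ico, prod_Ico_add' f 0 n 1, zero_add, Finset.Ico_add_one_right_eq_Icc]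

theorem cphi3'_succ (n : ℕ) :
    cphi3' (n + 1)
      = 9 * ∑ j ∈ range (n + 2), (-1) ^ j * (2 * j + 1) * aext (n - 9 * triangular j) := by
  set S := invOfUnit (aDenom (n + 1)) 1
  have hJ := (qPoch_pow_three_sModEq (X ^ 9 : ℤ⟦X⟧) (n + 1)).mul (SModEq.refl S)
  rw [← pow_mul] at hJ
  calc cphi3' (n + 1) = 9 * coeff n (qPoch (X ^ 9) (n + 1) ^ 3 * S) := by
        rw [cphi3', prod_pow, prod_Icc_one_eq_prod_range, ← aDenom,
          show (9 : ℤ⟦X⟧) = C 9 by simp, mul_assoc, mul_assoc, coeff_C_mul, coeff_succ_X_mul]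
        simp only [qPoch, pow_mul, S]
    _ = 9 * ∑ j ∈ range (n + 2),
          ((-1) ^ j * (2 * j + 1) : ℤ) * coeff n ((X ^ 9) ^ triangular j * S) := by
        rw [coeff_eq_of_sModEq hJ (by omega), sum_mul, map_sum]
        congr 1
        refine sum_congr rfl fun j _ => ?_
        rw [show ((-1) ^ j * (2 * j + 1) : ℤ⟦X⟧) = C ((-1) ^ j * (2 * j + 1) : ℤ) by simp,
          mul_assoc, coeff_C_mul]
    _ = _ := by
        congr 1
        refine sum_congr rfl fun j _ => ?_
        rw [← pow_mul, coeff_X_pow_mul',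
          show (n : ℤ) - 9 * triangular j = n - (9 * triangular j : ℕ) by push_cast; ring,
          aext_natCast_sub]
        split_ifs with h
        · rw [coeff_invOfUnit_aDenom (by omega)]
        · rfl

theorem triangular_emod_five {j : ℤ} (hj : j % 5 ≠ 2) :
    (triangular j : ℤ) % 5 = 0 ∨ (triangular j : ℤ) % 5 = 1 := by
  have h := two_mul_triangular j
  have key : j * (j + 1) % 5 = j % 5 * (j % 5 + 1) % 5 := by simp [Int.mul_emod, Int.add_emod]
  have := Int.emod_nonneg j (by norm_num : (5 : ℤ) ≠ 0)
  have := Int.emod_lt_of_pos j (by norm_num : (0 : ℤ) < 5)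
  generalize j * (j + 1) = P at *
  interval_cases j % 5 <;> omega

theorem five_dvd_aext (ha6 : ∀ n : ℕ, a (15 * n + 6) ≡ 0 [ZMOD 5])
    (ha12 : ∀ n : ℕ, a (15 * n + 12) ≡ 0 [ZMOD 5]) {t : ℤ}
    (ht : t % 15 = 6 ∨ t % 15 = 12) : 5 ∣ aext t := by
  unfold aext
  split_ifs with h
  · obtain ⟨u, hu | hu⟩ : ∃ u : ℕ, t.toNat = 15 * u + 6 ∨ t.toNat = 15 * u + 12 :=
      ⟨t.toNat / 15, by omega⟩
    · exact Int.modEq_zero_iff_dvd.mp (hu ▸ ha6 u)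
    · exact Int.modEq_zero_iff_dvd.mp (hu ▸ ha12 u)
  · exact dvd_zero 5

theorem five_dvd_summand (ha6 : ∀ n : ℕ, a (15 * n + 6) ≡ 0 [ZMOD 5])
    (ha12 : ∀ n : ℕ, a (15 * n + 12) ≡ 0 [ZMOD 5]) (n j : ℕ) :
    5 ∣ (2 * j + 1) * aext (45 * n + 6 - 9 * triangular j) := by
  by_cases hj : (j : ℤ) % 5 = 2
  · exact dvd_mul_of_dvd_left (by omega) _
  · have := triangular_emod_five hj
    exact dvd_mul_of_dvd_right (five_dvd_aext ha6 ha12 (by omega)) _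

theorem cphi3'_cong_7
    (ha6 : ∀ n : ℕ, a (15 * n + 6) ≡ 0 [ZMOD 5])
    (ha12 : ∀ n : ℕ, a (15 * n + 12) ≡ 0 [ZMOD 5]) :
    ∀ n : ℕ, cphi3' (45 * n + 7) ≡ 0 [ZMOD 5] := by
  intro n
  rw [Int.modEq_zero_iff_dvd, cphi3'_succ]
  refine dvd_mul_of_dvd_right (dvd_sum fun j _ => ?_) _
  rw [mul_assoc]
  exact dvd_mul_of_dvd_right (by simpa using five_dvd_summand ha6 ha12 n j) _
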